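/- Let A be a symmetric positive definite n×n real matrix with extreme eigenvalues μ_min, μ_max, let τ = ‖B‖₂ for an n×n real matrix B, and set Ω = ωI with ω > 0. If τ < μ_min and ω > (μ_max - μ_min)/2 + τ, then ‖(A + ωI)^{-1}‖₂ (‖ωI - A‖₂ + 2‖B‖₂) < 1, and hence the NMN iteration (ωI + A) x^(k+1) = (ωI - A) x^(k) + 2(B |x^(k)| + b) converges linearly from any initial vector to any solution x* of A x - B |x| = b. -/

import Mathlib

open Matrix Filter

noncomputable def spec {n : ℕ} (A : Matrix (Fin n) (Fin n) ℝ) : ℝ :=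
  ‖Matrix.toEuclideanCLM (𝕜 := ℝ) A‖

noncomputable def enorm2 {n : ℕ} (x : Fin n → ℝ) : ℝ :=
  ‖(WithLp.equiv 2 (Fin n → ℝ)).symm x‖

def vabs {n : ℕ} (x : Fin n → ℝ) : Fin n → ℝ := fun i => |x i|

def entAbs {n : ℕ} (A : Matrix (Fin n) (Fin n) ℝ) : Matrix (Fin n) (Fin n) ℝ :=
  fun i j => |A i j|

def compMat {n : ℕ} (A : Matrix (Fin n) (Fin n) ℝ) : Matrix (Fin n) (Fin n) ℝ :=
  fun i j => if i = j then |A i j| else -|A i j|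

noncomputable def specRad {n : ℕ} (A : Matrix (Fin n) (Fin n) ℝ) : ENNReal :=
  spectralRadius ℂ (A.map Complex.ofReal)

/-!
The spectrum of the symmetric matrix `A` lies in `[μmin, μmax]`, so the functional calculus gives
`‖(A + ωI)⁻¹‖ ≤ 1 / (μmin + ω)` and `‖ωI - A‖ ≤ max (ω - μmin) (μmax - ω)`; the hypotheses on `τ`
and `ω` say exactly that `max (ω - μmin) (μmax - ω) + 2τ < μmin + ω`.

Subtracting the fixed-point form `(ωI + A) x* = (ωI - A) x* + 2 (B |x*| + b)` of the equation from
the iteration, the error `e = x - x*` satisfies `(ωI + A) e⁺ = (ωI - A) e + 2 B (|x| - |x*|)`.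
As `||x| - |x*|| ≤ |e|` componentwise, `‖e⁺‖₂` is at most the constant above times `‖e‖₂`.
-/

open Set
open scoped Matrix.Norms.L2Operator

section SelfAdjoint

variable {A : Type*} [NormedRing A] [StarRing A] [NormedAlgebra ℝ A]
  [IsometricContinuousFunctionalCalculus ℝ A IsSelfAdjoint] {a : A}

lemma IsSelfAdjoint.norm_algebraMap_sub_le (ha : IsSelfAdjoint a) {m M : ℝ}
    (hσ : spectrum ℝ a ⊆ Icc m M) (hmM : m ≤ M) (ω : ℝ) :
    ‖algebraMap ℝ A ω - a‖ ≤ max (ω - m) (M - ω) := by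
  rw [← cfc_id' ℝ a, ← cfc_const ω a, ← cfc_sub (fun _ => ω) (fun x => x)]
  refine norm_cfc_le (by rw [le_max_iff]; by_contra! h; linarith) fun x hx => ?_
  obtain ⟨hmx, hxM⟩ := hσ hx
  rw [Real.norm_eq_abs, abs_le]
  constructor <;> linarith [le_max_left (ω - m) (M - ω), le_max_right (ω - m) (M - ω)]

lemma IsSelfAdjoint.norm_inverse_add_algebraMap_le (ha : IsSelfAdjoint a) {m ω : ℝ}
    (hσ : ∀ x ∈ spectrum ℝ a, m ≤ x) (hmω : 0 < m + ω) :
    ‖Ring.inverse (a + algebraMap ℝ A ω)‖ ≤ (m + ω)⁻¹ := by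
  have hpos : ∀ x ∈ spectrum ℝ a, 0 < x + ω := fun x hx => by linarith [hσ x hx]
  rw [← cfc_id' ℝ a, ← cfc_add_const ω (fun x => x) a,
    ← cfc_inv (fun x => x + ω) a fun x hx => (hpos x hx).ne']
  refine norm_cfc_le (inv_nonneg.mpr hmω.le) fun x hx => ?_
  rw [norm_inv, Real.norm_of_nonneg (hpos x hx).le]
  exact inv_anti₀ hmω (by linarith [hσ x hx])

end SelfAdjoint

lemma tendsto_of_dist_succ_le_mul {X : Type*} [PseudoMetricSpace X] {x : ℕ → X} {a : X}
    {c : ℝ} (hc : c < 1) (h : ∀ k, dist (x (k + 1)) a ≤ c * dist (x k) a) :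
    Tendsto x atTop (nhds a) := by
  set r := max c 0
  have hgeom : ∀ k, dist (x k) a ≤ r ^ k * dist (x 0) a := by
    intro k
    induction k with
    | zero => simp
    | succ k ih => calc
        dist (x (k + 1)) a ≤ c * dist (x k) a := h k
        _ ≤ r * (r ^ k * dist (x 0) a) :=
          mul_le_mul (le_max_left c 0) ih dist_nonneg (le_max_right c 0)
        _ = r ^ (k + 1) * dist (x 0) a := by ring
  refine tendsto_iff_dist_tendsto_zero.mpr (squeeze_zero (fun _ => dist_nonneg) hgeom ?_)
  simpa using (tendsto_pow_atTop_nhds_zero_of_lt_one (le_max_right c 0)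
    (max_lt hc one_pos)).mul_const (dist (x 0) a)

section Euclidean

variable {n : ℕ}

lemma spec_nonneg (A : Matrix (Fin n) (Fin n) ℝ) : 0 ≤ spec A := norm_nonneg _

lemma enorm2_sub_eq_dist (x y : Fin n → ℝ) :
    enorm2 (x - y) = dist (WithLp.toLp 2 x) (WithLp.toLp 2 y) := by
  rw [dist_eq_norm, ← WithLp.toLp_sub]; rfl

lemma enorm2_mulVec_le (A : Matrix (Fin n) (Fin n) ℝ) (v : Fin n → ℝ) :
    enorm2 (A *ᵥ v) ≤ spec A * enorm2 v :=
  A.l2_opNorm_mulVec (WithLp.toLp 2 v)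

lemma enorm2_add_two_smul_le (u v : Fin n → ℝ) :
    enorm2 (u + (2 : ℝ) • v) ≤ enorm2 u + 2 * enorm2 v := by
  simp only [enorm2, WithLp.equiv_symm_apply, WithLp.toLp_add, WithLp.toLp_smul]
  refine (norm_add_le _ _).trans_eq ?_
  rw [norm_smul, Real.norm_two]

lemma enorm2_vabs_sub_vabs_le (x y : Fin n → ℝ) : enorm2 (vabs x - vabs y) ≤ enorm2 (x - y) := by
  simp only [enorm2, WithLp.equiv_symm_apply, EuclideanSpace.norm_eq]
  gcongr with i
  simpa [vabs] using abs_abs_sub_abs_le_abs_sub (x i) (y i)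

lemma enorm2_sub_le_of_splitting {M N B : Matrix (Fin n) (Fin n) ℝ} {b x x' xs : Fin n → ℝ}
    (hM : IsUnit M.det)
    (hx : M *ᵥ x' = N *ᵥ x + (2 : ℝ) • (B *ᵥ vabs x + b))
    (hxs : M *ᵥ xs = N *ᵥ xs + (2 : ℝ) • (B *ᵥ vabs xs + b)) :
    enorm2 (x' - xs) ≤ spec M⁻¹ * (spec N + 2 * spec B) * enorm2 (x - xs) := by
  have hMerr : M *ᵥ (x' - xs) = N *ᵥ (x - xs) + (2 : ℝ) • (B *ᵥ (vabs x - vabs xs)) := by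
    simp only [Matrix.mulVec_sub, hx, hxs]
    module
  have herr : x' - xs = M⁻¹ *ᵥ (N *ᵥ (x - xs) + (2 : ℝ) • (B *ᵥ (vabs x - vabs xs))) := by
    rw [← hMerr, Matrix.mulVec_mulVec, Matrix.nonsing_inv_mul M hM, Matrix.one_mulVec]
  have hB : enorm2 (B *ᵥ (vabs x - vabs xs)) ≤ spec B * enorm2 (x - xs) :=
    (enorm2_mulVec_le _ _).trans (by gcongr; exacts [spec_nonneg B, enorm2_vabs_sub_vabs_le x xs])
  calc enorm2 (x' - xs)
      ≤ spec M⁻¹ * enorm2 (N *ᵥ (x - xs) + (2 : ℝ) • (B *ᵥ (vabs x - vabs xs))) :=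
        herr ▸ enorm2_mulVec_le _ _
    _ ≤ spec M⁻¹ * (spec N * enorm2 (x - xs) + 2 * (spec B * enorm2 (x - xs))) := by
        gcongr
        · exact spec_nonneg _
        · exact (enorm2_add_two_smul_le _ _).trans
            (add_le_add (enorm2_mulVec_le _ _) (by linarith))
    _ = spec M⁻¹ * (spec N + 2 * spec B) * enorm2 (x - xs) := by ring

lemma spec_inv_add_smul_one_mul_lt_one {A B : Matrix (Fin n) (Fin n) ℝ} (hA : A.IsHermitian)
    {m M ω : ℝ} (hσ : spectrum ℝ A ⊆ Icc m M) (hmM : m ≤ M) (hB : spec B < m)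
    (hω : (M - m) / 2 + spec B < ω) :
    spec (A + ω • (1 : Matrix (Fin n) (Fin n) ℝ))⁻¹ *
      (spec (ω • (1 : Matrix (Fin n) (Fin n) ℝ) - A) + 2 * spec B) < 1 := by
  have hmω : 0 < m + ω := by linarith [spec_nonneg B]
  have hinv : spec (A + ω • (1 : Matrix (Fin n) (Fin n) ℝ))⁻¹ ≤ (m + ω)⁻¹ := by
    rw [← Algebra.algebraMap_eq_smul_one, Matrix.nonsing_inv_eq_ringInverse]
    exact hA.isSelfAdjoint.norm_inverse_add_algebraMap_le (fun x hx => (hσ hx).1) hmω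
  have hsub : spec (ω • (1 : Matrix (Fin n) (Fin n) ℝ) - A) ≤ max (ω - m) (M - ω) := by
    rw [← Algebra.algebraMap_eq_smul_one]
    exact hA.isSelfAdjoint.norm_algebraMap_sub_le hσ hmM ω
  refine (mul_le_mul hinv (add_le_add_left hsub _)
    (add_nonneg (spec_nonneg _) (mul_nonneg zero_le_two (spec_nonneg B)))
    (inv_nonneg.mpr hmω.le)).trans_lt ?_
  rw [inv_mul_lt_one₀ hmω, ← lt_sub_iff_add_lt, max_lt_iff]
  constructor <;> linarith

lemma tendsto_of_enorm2_sub_succ_le_mul {x : ℕ → Fin n → ℝ} {xs : Fin n → ℝ} {c : ℝ}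
    (hc : c < 1) (h : ∀ k, enorm2 (x (k + 1) - xs) ≤ c * enorm2 (x k - xs)) :
    Tendsto x atTop (nhds xs) := by
  simp only [enorm2_sub_eq_dist] at h
  exact (PiLp.continuous_ofLp 2 _).tendsto _ |>.comp (tendsto_of_dist_succ_le_mul hc h)

end Euclidean

theorem stmt7_general {n : ℕ} (A B : Matrix (Fin n) (Fin n) ℝ) (b : Fin n → ℝ)
    (hA : A.PosDef) (hH : A.IsHermitian) (μmin μmax : ℝ)
    (hminmem : ∃ i, hH.eigenvalues i = μmin)
    (hmin : ∀ i, μmin ≤ hH.eigenvalues i)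
    (hmax : ∀ i, hH.eigenvalues i ≤ μmax)
    (ω : ℝ) (hω : 0 < ω)
    (hτ : spec B < μmin) (hωbig : (μmax - μmin) / 2 + spec B < ω) :
    spec (A + ω • (1 : Matrix (Fin n) (Fin n) ℝ))⁻¹ *
      (spec (ω • (1 : Matrix (Fin n) (Fin n) ℝ) - A) + 2 * spec B) < 1 ∧
    ∀ xs : Fin n → ℝ, A.mulVec xs - B.mulVec (vabs xs) = b →
      ∀ x : ℕ → Fin n → ℝ,
        (∀ k, (ω • (1 : Matrix (Fin n) (Fin n) ℝ) + A).mulVec (x (k + 1)) =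
          (ω • (1 : Matrix (Fin n) (Fin n) ℝ) - A).mulVec (x k) +
            (2 : ℝ) • (B.mulVec (vabs (x k)) + b)) →
        (∃ c : ℝ, c < 1 ∧ ∀ k, enorm2 (x (k + 1) - xs) ≤ c * enorm2 (x k - xs)) ∧
          Tendsto x atTop (nhds xs) := by
  have hσ : spectrum ℝ A ⊆ Icc μmin μmax := by
    rw [hH.spectrum_real_eq_range_eigenvalues]
    rintro _ ⟨i, rfl⟩
    exact ⟨hmin i, hmax i⟩
  obtain ⟨i, rfl⟩ := hminmem
  have hc := spec_inv_add_smul_one_mul_lt_one hH hσ (hmax i) hτ hωbig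
  refine ⟨hc, fun xs hxs x hx => ?_⟩
  have hM : IsUnit (ω • (1 : Matrix (Fin n) (Fin n) ℝ) + A).det :=
    (Matrix.PosDef.posSemidef_add (Matrix.PosSemidef.one.smul hω.le) hA).det_pos.ne'.isUnit
  have hfix : (ω • (1 : Matrix (Fin n) (Fin n) ℝ) + A) *ᵥ xs =
      (ω • 1 - A) *ᵥ xs + (2 : ℝ) • (B *ᵥ vabs xs + b) := by
    rw [← hxs, Matrix.add_mulVec, Matrix.sub_mulVec]
    module
  have hstep := fun k => enorm2_sub_le_of_splitting hM (hx k) hfix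
  rw [add_comm A] at hc
  exact ⟨⟨_, hc, hstep⟩, tendsto_of_enorm2_sub_succ_le_mul hc hstep⟩

theorem stmt7 {n : ℕ} (A B : Matrix (Fin n) (Fin n) ℝ) (b : Fin n → ℝ)
    (hA : A.PosDef) (hH : A.IsHermitian) (μmin μmax : ℝ)
    (hminmem : ∃ i, hH.eigenvalues i = μmin)
    (hmaxmem : ∃ i, hH.eigenvalues i = μmax)
    (hmin : ∀ i, μmin ≤ hH.eigenvalues i)
    (hmax : ∀ i, hH.eigenvalues i ≤ μmax)
    (ω : ℝ) (hω : 0 < ω)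
    (hτ : spec B < μmin) (hωbig : (μmax - μmin) / 2 + spec B < ω) :
    spec (A + ω • (1 : Matrix (Fin n) (Fin n) ℝ))⁻¹ *
      (spec (ω • (1 : Matrix (Fin n) (Fin n) ℝ) - A) + 2 * spec B) < 1 ∧
    ∀ xs : Fin n → ℝ, A.mulVec xs - B.mulVec (vabs xs) = b →
      ∀ x : ℕ → Fin n → ℝ,
        (∀ k, (ω • (1 : Matrix (Fin n) (Fin n) ℝ) + A).mulVec (x (k + 1)) =
          (ω • (1 : Matrix (Fin n) (Fin n) ℝ) - A).mulVec (x k) +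
            (2 : ℝ) • (B.mulVec (vabs (x k)) + b)) →
        (∃ c : ℝ, c < 1 ∧ ∀ k, enorm2 (x (k + 1) - xs) ≤ c * enorm2 (x k - xs)) ∧
          Tendsto x atTop (nhds xs) :=
  stmt7_general A B b hA hH μmin μmax hminmem hmin hmax ω hω hτ hωbig
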